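/- (Quantitative Hilbert basis theorem) Let α be an ordinal and M an α-Noetherian module over a ring A. Then the polynomial module M[X] is an (ω ⊗ α)-Noetherian module over A[X], where ⊗ denotes the Hessenberg natural product of ordinals. -/

import Mathlib

open Ordinal

universe u

namespace Ordinal

/-- Natural (Hessenberg) addition, as formerly in Mathlib's `SetTheory/Ordinal/NaturalOps`. -/
noncomputable def nadd (a b : Ordinal.{u}) : Ordinal.{u} :=
  max (⨆ x : Set.Iio a, Order.succ (nadd x.1 b)) (⨆ x : Set.Iio b, Order.succ (nadd a x.1))
termination_by (a, b)
decreasing_by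
  · exact Prod.Lex.left _ _ x.2
  · exact Prod.Lex.right _ x.2

/-- Natural (Hessenberg) multiplication, as formerly in Mathlib's
`SetTheory/Ordinal/NaturalOps`. -/
noncomputable def nmul (a b : Ordinal.{u}) : Ordinal.{u} :=
  sInf {c | ∀ a' < a, ∀ b' < b, nadd (nmul a' b) (nmul a b') < nadd c (nmul a' b')}
termination_by (a, b)
decreasing_by
  · exact Prod.Lex.left _ _ ‹a' < a›
  · exact Prod.Lex.right _ ‹b' < b›
  · exact Prod.Lex.left _ _ ‹a' < a›

end Ordinal

/-- A list is good ((-1)-good) if it is nonempty and its last entry lies in the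
submodule generated by the preceding entries. -/
def GoodList (A : Type*) {M : Type*} [Ring A] [AddCommGroup M] [Module A M]
    (σ : List M) : Prop :=
  ∃ (l : List M) (x : M), σ = l ++ [x] ∧ x ∈ Submodule.span A {y | y ∈ l}

/-- A list `σ` is `α`-good if for every `x`, the appended list `σ.x` is either good
((-1)-good) or `β`-good for some ordinal `β < α`.  A module `M` is `α`-Noetherian
if the empty list `[] : List M` is `α`-good; a ring is `α`-Noetherian if it is
`α`-Noetherian as a left module over itself. -/
def AlphaGood (A : Type*) {M : Type*} [Ring A] [AddCommGroup M] [Module A M]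
    (α : Ordinal) (σ : List M) : Prop :=
  ∀ x : M, GoodList A (σ ++ [x]) ∨ ∃ (β : Ordinal) (_ : β < α), AlphaGood A β (σ ++ [x])
termination_by α
noncomputable section

variable (A M : Type*) [Ring A] [AddCommGroup M] [Module A M]

/-- Scalar multiplication by `a : A`, coefficientwise on `M[X] = ℕ →₀ M`, as a
ring homomorphism into additive endomorphisms. -/
def coeffMulHom : A →+* AddMonoid.End (ℕ →₀ M) where
  toFun a := Finsupp.mapRange.addMonoidHom (DistribMulAction.toAddMonoidHom M a)
  map_one' := by
    refine DFunLike.ext _ _ fun f => Finsupp.ext fun n => ?_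
    show (1 : A) • f n = f n
    exact one_smul A (f n)
  map_mul' a b := by
    refine DFunLike.ext _ _ fun f => Finsupp.ext fun n => ?_
    show (a * b) • f n = a • b • f n
    exact mul_smul a b (f n)
  map_zero' := by
    refine DFunLike.ext _ _ fun f => Finsupp.ext fun n => ?_
    show (0 : A) • f n = 0
    exact zero_smul A (f n)
  map_add' a b := by
    refine DFunLike.ext _ _ fun f => Finsupp.ext fun n => ?_
    show (a + b) • f n = a • f n + b • f n
    exact add_smul a b (f n)

/-- Multiplication by `X` on `M[X] = ℕ →₀ M` (degree shift). -/
def shiftEnd : AddMonoid.End (ℕ →₀ M) :=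
  Finsupp.mapDomain.addMonoidHom (· + 1)

theorem coeffMulHom_commute_shiftEnd (a : A) :
    Commute (coeffMulHom A M a) (shiftEnd M) := by
  refine DFunLike.ext _ _ fun f => ?_
  show ((coeffMulHom A M a : (ℕ →₀ M) →+ (ℕ →₀ M)).comp (shiftEnd M)) f =
    ((shiftEnd M : (ℕ →₀ M) →+ (ℕ →₀ M)).comp (coeffMulHom A M a)) f
  simp only [AddMonoidHom.comp_apply, coeffMulHom, shiftEnd, RingHom.coe_mk,
    MonoidHom.coe_mk, OneHom.coe_mk, Finsupp.mapRange.addMonoidHom_apply,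
    Finsupp.mapDomain.addMonoidHom_apply]
  exact (Finsupp.mapDomain_mapRange _ _ _ (map_zero _) (smul_add a)).symm

/-- The `A[X]`-module structure on the polynomial module `M[X] = ℕ →₀ M`:
`(∑ aᵢ Xⁱ) • m = ∑ aᵢ • (m shifted by i)`.  This works for an arbitrary
(possibly noncommutative) ring `A`. -/
instance polyModule : Module (Polynomial A) (ℕ →₀ M) :=
  Module.compHom _
    (Polynomial.eval₂RingHom' (coeffMulHom A M) (shiftEnd M)
      (coeffMulHom_commute_shiftEnd A M))

/-!
`RelRankLE γ N P` bounds by `γ` the game in which `P` is enlarged, strictly and one element at a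
time, by elements of `N`; a list is `γ`-good exactly when this game for `N = ⊤`, started at the
span of the list, is bounded by `γ`.

For a submodule `I` of `M[X]` let `Lₙ(I) ≤ M` consist of the degree-`n` coefficients of the
elements of `I` of degree at most `n`. A polynomial `p ∉ I` enlarges some `Lₙ`, by a coefficient
`c` say. We follow `I` by a submodule `Λ ≤ M` and layers `Tₖ ≤ Lₖ(I)` with `Tₖ = Λ` for `k ≥ B`,
measured by `ω ⊗ rk(Λ) ⊕ ⨁_{k < B} rk_Λ(Tₖ)`, and we add `c` to `Λ` and to every `Tₖ` with
`k ≥ n`. If `c ∈ Λ`, only the `n`-th summand changes, and it drops. Otherwise `rk(Λ)` drops to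
some `g'` with `g' + s ≤ rk(Λ)`, where `s = rk_{Λ + Ac}(Λ) > 0`, while each of the (at most `B'`)
summands grows by at most `s`; the inequality `ω ⊗ g' ⊕ B' ⊗ s < ω ⊗ (g' + s)` absorbs this.
So every move lowers the measure, which starts at `ω ⊗ rk(M) ≤ ω ⊗ α`.
-/

infixl:65 " ♯ " => Ordinal.nadd

infixl:70 " ⨳ " => Ordinal.nmul

namespace Ordinal

theorem lt_nadd_iff {a b c : Ordinal} :
    a < b ♯ c ↔ (∃ b' < b, a ≤ b' ♯ c) ∨ ∃ c' < c, a ≤ b ♯ c' := by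
  rw [nadd, lt_max_iff, Ordinal.lt_iSup_iff, Ordinal.lt_iSup_iff]
  simp only [Order.lt_succ_iff, Subtype.exists, Set.mem_Iio, exists_prop]

theorem nadd_le_iff {a b c : Ordinal} :
    b ♯ c ≤ a ↔ (∀ b' < b, b' ♯ c < a) ∧ ∀ c' < c, b ♯ c' < a := by
  rw [← not_lt, lt_nadd_iff]
  simp only [not_or, not_exists, not_and, not_le]

theorem nadd_lt_nadd_left {b c : Ordinal} (h : b < c) (a : Ordinal) : a ♯ b < a ♯ c :=
  lt_nadd_iff.2 (Or.inr ⟨b, h, le_rfl⟩)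

theorem nadd_lt_nadd_right {b c : Ordinal} (h : b < c) (a : Ordinal) : b ♯ a < c ♯ a :=
  lt_nadd_iff.2 (Or.inl ⟨b, h, le_rfl⟩)

theorem nadd_le_nadd_left {b c : Ordinal} (h : b ≤ c) (a : Ordinal) : a ♯ b ≤ a ♯ c := by
  rcases h.lt_or_eq with h | rfl
  · exact (nadd_lt_nadd_left h a).le
  · exact le_rfl

theorem nadd_le_nadd_right {b c : Ordinal} (h : b ≤ c) (a : Ordinal) : b ♯ a ≤ c ♯ a := by
  rcases h.lt_or_eq with h | rfl
  · exact (nadd_lt_nadd_right h a).le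
  · exact le_rfl

theorem nadd_le_nadd {a b c d : Ordinal} (h₁ : a ≤ b) (h₂ : c ≤ d) : a ♯ c ≤ b ♯ d :=
  (nadd_le_nadd_right h₁ c).trans (nadd_le_nadd_left h₂ b)

theorem nadd_lt_nadd_of_lt_of_le {a b c d : Ordinal} (h₁ : a < b) (h₂ : c ≤ d) :
    a ♯ c < b ♯ d :=
  (nadd_lt_nadd_right h₁ c).trans_le (nadd_le_nadd_left h₂ b)

theorem nadd_lt_nadd_of_le_of_lt {a b c d : Ordinal} (h₁ : a ≤ b) (h₂ : c < d) :
    a ♯ c < b ♯ d :=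
  (nadd_le_nadd_right h₁ c).trans_lt (nadd_lt_nadd_left h₂ b)

theorem lt_of_nadd_lt_nadd_right {a b c : Ordinal} (h : a ♯ c < b ♯ c) : a < b :=
  lt_of_not_ge fun h' => h.not_ge (nadd_le_nadd_right h' c)

theorem nadd_comm (a b : Ordinal) : a ♯ b = b ♯ a := by
  induction a using WellFoundedLT.induction generalizing b with | ind a iha
  induction b using WellFoundedLT.induction with | ind b ihb
  refine le_antisymm (nadd_le_iff.2 ⟨fun a' ha => ?_, fun b' hb => ?_⟩)
    (nadd_le_iff.2 ⟨fun b' hb => ?_, fun a' ha => ?_⟩)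
  · rw [iha a' ha b]; exact nadd_lt_nadd_left ha b
  · rw [ihb b' hb]; exact nadd_lt_nadd_right hb a
  · rw [← ihb b' hb]; exact nadd_lt_nadd_left hb a
  · rw [← iha a' ha b]; exact nadd_lt_nadd_right ha b

@[simp] theorem nadd_zero (a : Ordinal) : a ♯ 0 = a := by
  induction a using WellFoundedLT.induction with | ind a ih
  refine le_antisymm (nadd_le_iff.2 ⟨fun a' ha => ?_, fun c hc => (not_lt_zero hc).elim⟩)
    (le_of_forall_lt fun c hc => ?_)
  · rwa [ih a' ha]
  · exact lt_nadd_iff.2 (Or.inl ⟨c, hc, (ih c hc).ge⟩)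

@[simp] theorem zero_nadd (a : Ordinal) : 0 ♯ a = a := by
  rw [nadd_comm, nadd_zero]

theorem nadd_one (a : Ordinal) : a ♯ 1 = a + 1 := by
  induction a using WellFoundedLT.induction with | ind a ih
  refine le_antisymm (nadd_le_iff.2 ⟨fun a' ha => ?_, fun c hc => ?_⟩) ?_
  · rwa [ih a' ha, ← Order.succ_eq_add_one, ← Order.succ_eq_add_one, Order.succ_lt_succ_iff]
  · rw [Order.lt_one_iff.1 hc, nadd_zero]
    exact lt_add_one a
  · rw [← Order.succ_eq_add_one, Order.succ_le_iff]
    simpa using nadd_lt_nadd_left zero_lt_one a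

theorem add_le_nadd (a b : Ordinal) : a + b ≤ a ♯ b := by
  induction b using WellFoundedLT.induction with | ind b ih
  rcases eq_or_ne b 0 with rfl | hb
  · rw [add_zero, nadd_zero]
  · refine (Ordinal.add_le_iff hb).2 fun d hd => ?_
    exact (ih d hd).trans_lt (nadd_lt_nadd_left hd a)

theorem nadd_assoc (a b c : Ordinal) : a ♯ b ♯ c = a ♯ (b ♯ c) := by
  induction a using WellFoundedLT.induction generalizing b c with | ind a iha
  induction b using WellFoundedLT.induction generalizing c with | ind b ihb
  induction c using WellFoundedLT.induction with | ind c ihc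
  apply le_antisymm
  · refine nadd_le_iff.2 ⟨fun x hx => ?_, fun c' hc => ?_⟩
    · rcases lt_nadd_iff.1 hx with ⟨a', ha, hx⟩ | ⟨b', hb, hx⟩
      · calc x ♯ c ≤ a' ♯ b ♯ c := nadd_le_nadd_right hx c
          _ = a' ♯ (b ♯ c) := iha a' ha b c
          _ < a ♯ (b ♯ c) := nadd_lt_nadd_right ha _
      · calc x ♯ c ≤ a ♯ b' ♯ c := nadd_le_nadd_right hx c
          _ = a ♯ (b' ♯ c) := ihb b' hb c
          _ < a ♯ (b ♯ c) := nadd_lt_nadd_left (nadd_lt_nadd_right hb c) a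
    · rw [ihc c' hc]; exact nadd_lt_nadd_left (nadd_lt_nadd_left hc b) a
  · refine nadd_le_iff.2 ⟨fun a' ha => ?_, fun y hy => ?_⟩
    · rw [← iha a' ha b c]; exact nadd_lt_nadd_right (nadd_lt_nadd_right ha b) c
    · rcases lt_nadd_iff.1 hy with ⟨b', hb, hy⟩ | ⟨c', hc, hy⟩
      · calc a ♯ y ≤ a ♯ (b' ♯ c) := nadd_le_nadd_left hy a
          _ = a ♯ b' ♯ c := (ihb b' hb c).symm
          _ < a ♯ b ♯ c := nadd_lt_nadd_right (nadd_lt_nadd_left hb a) c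
      · calc a ♯ y ≤ a ♯ (b ♯ c') := nadd_le_nadd_left hy a
          _ = a ♯ b ♯ c' := (ihc c' hc).symm
          _ < a ♯ b ♯ c := nadd_lt_nadd_left hc _

instance : Std.Associative (α := Ordinal) (· ♯ ·) := ⟨nadd_assoc⟩

instance : Std.Commutative (α := Ordinal) (· ♯ ·) := ⟨nadd_comm⟩

theorem nmul_eq (a b : Ordinal) :
    a ⨳ b = sInf {c | ∀ a' < a, ∀ b' < b, a' ⨳ b ♯ a ⨳ b' < c ♯ a' ⨳ b'} := by
  rw [nmul]

theorem nmul_nadd_lt {a' a b' b : Ordinal} (ha : a' < a) (hb : b' < b) :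
    a' ⨳ b ♯ a ⨳ b' < a ⨳ b ♯ a' ⨳ b' := by
  have hne : {c | ∀ a' < a, ∀ b' < b, a' ⨳ b ♯ a ⨳ b' < c ♯ a' ⨳ b'}.Nonempty := by
    obtain ⟨c, hc⟩ : BddAbove (Set.range fun x : Set.Iio a × Set.Iio b =>
        x.1.1 ⨳ b ♯ a ⨳ x.2.1) := Ordinal.bddAbove_of_small
    refine ⟨c + 1, fun a' ha b' hb => ?_⟩
    exact (Order.lt_add_one_iff.2 (hc ⟨(⟨a', ha⟩, ⟨b', hb⟩), rfl⟩)).trans_le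
      ((le_self_add).trans (add_le_nadd _ _))
  have := csInf_mem hne
  rw [← nmul_eq] at this
  exact this a' ha b' hb

theorem lt_nmul_iff {a b c : Ordinal} :
    c < a ⨳ b ↔ ∃ a' < a, ∃ b' < b, c ♯ a' ⨳ b' ≤ a' ⨳ b ♯ a ⨳ b' := by
  refine ⟨fun h => ?_, ?_⟩
  · by_contra! H
    rw [nmul_eq] at h
    exact h.not_ge (csInf_le' H)
  · rintro ⟨a', ha, b', hb, h⟩
    exact lt_of_nadd_lt_nadd_right (h.trans_lt (nmul_nadd_lt ha hb))

theorem nmul_le_iff {a b c : Ordinal} :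
    a ⨳ b ≤ c ↔ ∀ a' < a, ∀ b' < b, a' ⨳ b ♯ a ⨳ b' < c ♯ a' ⨳ b' := by
  rw [← not_lt, lt_nmul_iff]
  simp only [not_exists, not_and, not_le]

theorem nmul_comm (a b : Ordinal) : a ⨳ b = b ⨳ a := by
  induction a using WellFoundedLT.induction generalizing b with | ind a iha
  induction b using WellFoundedLT.induction with | ind b ihb
  rw [nmul_eq, nmul_eq b a]
  congr 1
  ext x
  constructor
  · intro H b' hb a' ha
    have := H a' ha b' hb
    rw [iha a' ha b, ihb b' hb, iha a' ha b'] at this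
    exact (nadd_comm _ _).trans_lt this
  · intro H a' ha b' hb
    have := H b' hb a' ha
    rw [iha a' ha b, ihb b' hb, iha a' ha b']
    exact (nadd_comm _ _).trans_lt this

@[simp] theorem zero_nmul (a : Ordinal) : 0 ⨳ a = 0 :=
  le_antisymm (nmul_le_iff.2 fun _ ha => (not_lt_zero ha).elim) zero_le

@[simp] theorem one_nmul (a : Ordinal) : 1 ⨳ a = a := by
  induction a using WellFoundedLT.induction with | ind a ih
  refine le_antisymm (nmul_le_iff.2 fun a' ha b' hb => ?_) (le_of_forall_lt fun c hc => ?_)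
  · rw [Order.lt_one_iff.1 ha, zero_nmul, zero_nmul, zero_nadd, nadd_zero, ih b' hb]
    exact hb
  · exact lt_nmul_iff.2 ⟨0, zero_lt_one, c, hc, by
      rw [zero_nmul, zero_nmul, nadd_zero, zero_nadd, ih c hc]⟩

theorem nmul_le_nmul_left {a b : Ordinal} (h : a ≤ b) (c : Ordinal) : c ⨳ a ≤ c ⨳ b := by
  rcases h.lt_or_eq with h | rfl
  · rcases eq_zero_or_pos c with rfl | hc
    · simp
    · exact (lt_nmul_iff.2 ⟨0, hc, a, h, by simp⟩).le
  · exact le_rfl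

theorem nmul_nadd_le {a' a b' b : Ordinal} (ha : a' ≤ a) (hb : b' ≤ b) :
    a' ⨳ b ♯ a ⨳ b' ≤ a ⨳ b ♯ a' ⨳ b' := by
  rcases ha.lt_or_eq with ha | rfl
  · rcases hb.lt_or_eq with hb | rfl
    · exact (nmul_nadd_lt ha hb).le
    · rw [nadd_comm]
  · exact le_rfl

theorem nmul_nadd (a b c : Ordinal) : a ⨳ (b ♯ c) = a ⨳ b ♯ a ⨳ c := by
  induction a using WellFoundedLT.induction generalizing b c with | ind a iha
  induction b using WellFoundedLT.induction generalizing c with | ind b ihb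
  induction c using WellFoundedLT.induction with | ind c ihc
  apply le_antisymm
  · refine nmul_le_iff.2 fun a' ha d hd => ?_
    rw [iha a' ha b c]
    rcases lt_nadd_iff.1 hd with ⟨b', hb, hd⟩ | ⟨c', hc, hd⟩
    · have h := nadd_lt_nadd_of_lt_of_le (nmul_nadd_lt ha hb) (nmul_nadd_le ha.le hd)
      rw [iha a' ha b' c, ihb b' hb c] at h
      exact lt_of_nadd_lt_nadd_right (c := a ⨳ b' ♯ a' ⨳ b') (by convert h using 1 <;> ac_rfl)
    · have h := nadd_lt_nadd_of_lt_of_le (nmul_nadd_lt ha hc) (nmul_nadd_le ha.le hd)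
      rw [iha a' ha b c', ihc c' hc] at h
      exact lt_of_nadd_lt_nadd_right (c := a ⨳ c' ♯ a' ⨳ c') (by convert h using 1 <;> ac_rfl)
  · refine nadd_le_iff.2 ⟨fun d hd => ?_, fun d hd => ?_⟩
    · obtain ⟨a', ha, b', hb, hd⟩ := lt_nmul_iff.1 hd
      have h := nadd_lt_nadd_of_le_of_lt hd (nmul_nadd_lt ha (nadd_lt_nadd_right hb c))
      rw [iha a' ha b c, ihb b' hb c, iha a' ha b' c] at h
      exact lt_of_nadd_lt_nadd_right (c := a' ⨳ b' ♯ a' ⨳ b ♯ a' ⨳ c ♯ a ⨳ b')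
        (by convert h using 1 <;> ac_rfl)
    · obtain ⟨a', ha, c', hc, hd⟩ := lt_nmul_iff.1 hd
      have h := nadd_lt_nadd_of_le_of_lt hd (nmul_nadd_lt ha (nadd_lt_nadd_left hc b))
      rw [iha a' ha b c, ihc c' hc, iha a' ha b c'] at h
      exact lt_of_nadd_lt_nadd_right (c := a' ⨳ c' ♯ a' ⨳ b ♯ a' ⨳ c ♯ a ⨳ c')
        (by convert h using 1 <;> ac_rfl)

theorem natCast_succ_nmul (n : ℕ) (a : Ordinal) : ((n + 1 : ℕ) : Ordinal) ⨳ a = n ⨳ a ♯ a := by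
  rw [nmul_comm, Nat.cast_succ, ← nadd_one, nmul_nadd, nmul_comm, nmul_comm a, one_nmul]

theorem natCast_nmul_lt {P a : Ordinal} (hP : IsPrincipal (· ♯ ·) P) (ha : a < P) (n : ℕ) :
    n ⨳ a < P := by
  induction n with
  | zero => simpa using pos_of_gt ha
  | succ n ih => rw [natCast_succ_nmul]; exact hP ih ha


section Principal

variable {P : Ordinal}

theorem mul_nadd_of_lt (hP : IsPrincipal (· ♯ ·) P) (q : Ordinal) {r : Ordinal}
    (hr : r < P) : P * q ♯ r = P * q + r := by
  have hP₀ : P ≠ 0 := (pos_of_gt hr).ne'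
  induction q using WellFoundedLT.induction generalizing r with | ind q ihq
  induction r using WellFoundedLT.induction with | ind r ihr
  refine le_antisymm (nadd_le_iff.2 ⟨fun u hu => ?_, fun w hw => ?_⟩) (add_le_nadd _ _)
  · have hq : u / P < q := (lt_mul_iff_div_lt hP₀).1 hu
    have hm : u % P < P := mod_lt u hP₀
    calc u ♯ r = P * (u / P) ♯ u % P ♯ r := by rw [ihq _ hq hm, div_add_mod]
      _ = P * (u / P) + (u % P ♯ r) := by rw [nadd_assoc, ihq _ hq (hP hm hr)]
      _ < P * (u / P) + P := add_lt_add_right (hP hm hr) _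
      _ = P * (u / P + 1) := (mul_add_one _ _).symm
      _ ≤ P * q := mul_le_mul_right (Order.add_one_le_of_lt hq) P
      _ ≤ P * q + r := le_self_add
  · rw [ihr w hw (hw.trans hr)]
    exact add_lt_add_right hw _

theorem mul_div_nadd_mod (hP : IsPrincipal (· ♯ ·) P) (a : Ordinal) :
    P * (a / P) ♯ a % P = a := by
  rcases eq_or_ne P 0 with rfl | hP₀
  · simp
  · rw [mul_nadd_of_lt hP _ (mod_lt a hP₀), div_add_mod]

theorem mul_nadd_self (hP : IsPrincipal (· ♯ ·) P) (q : Ordinal) :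
    P * q ♯ P = P * (q + 1) := by
  rcases eq_or_ne P 0 with rfl | hP₀
  · simp
  induction q using WellFoundedLT.induction with | ind q ih
  refine le_antisymm (nadd_le_iff.2 ⟨fun u hu => ?_, fun w hw => ?_⟩) ?_
  · have hq : u / P < q := (lt_mul_iff_div_lt hP₀).1 hu
    have hm : u % P < P := mod_lt u hP₀
    calc u ♯ P = P * (u / P) ♯ P ♯ u % P := by
          conv_lhs => rw [← mul_div_nadd_mod hP u]
          ac_rfl
      _ = P * (u / P + 1) + u % P := by rw [ih _ hq, mul_nadd_of_lt hP _ hm]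
      _ < P * (u / P + 1) + P := add_lt_add_right hm _
      _ = P * (u / P + 1 + 1) := (mul_add_one _ _).symm
      _ ≤ P * (q + 1) := mul_le_mul_right (add_le_add_left (Order.add_one_le_of_lt hq) 1) P
  · rw [mul_nadd_of_lt hP _ hw, mul_add_one]
    exact add_lt_add_right hw _
  · rw [mul_add_one]
    exact add_le_nadd _ _

theorem mul_nadd_mul_natCast (hP : IsPrincipal (· ♯ ·) P) (q : Ordinal) (n : ℕ) :
    P * q ♯ P * n = P * (q + n) := by
  induction n with
  | zero => simp
  | succ n ih =>
    rw [Nat.cast_succ, ← mul_nadd_self hP, ← nadd_assoc, ih, mul_nadd_self hP, add_assoc]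

theorem mul_nadd_of_lt_mul_omega0 (hP : IsPrincipal (· ♯ ·) P) (q : Ordinal)
    {s : Ordinal} (hs : s < P * ω) : P * q ♯ s = P * q + s := by
  have hP₀ : P ≠ 0 := by rintro rfl; simp at hs
  obtain ⟨k, hk⟩ := lt_omega0.1 ((lt_mul_iff_div_lt hP₀).1 hs)
  have hm : s % P < P := mod_lt s hP₀
  calc P * q ♯ s = P * q ♯ P * k ♯ s % P := by rw [nadd_assoc, ← hk, mul_div_nadd_mod hP]
    _ = P * q + s := by
      rw [mul_nadd_mul_natCast hP, mul_nadd_of_lt hP _ hm, mul_add, add_assoc, ← hk,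
        div_add_mod]

theorem isPrincipal_nadd_mul_omega0 (hP : IsPrincipal (· ♯ ·) P) :
    IsPrincipal (· ♯ ·) (P * ω) := by
  intro a b ha hb
  have hP₀ : P ≠ 0 := by rintro rfl; simp at ha
  obtain ⟨m, hm⟩ := lt_omega0.1 ((lt_mul_iff_div_lt hP₀).1 ha)
  obtain ⟨k, hk⟩ := lt_omega0.1 ((lt_mul_iff_div_lt hP₀).1 hb)
  have hr : a % P ♯ b % P < P := hP (mod_lt a hP₀) (mod_lt b hP₀)
  calc a ♯ b = P * m ♯ P * k ♯ (a % P ♯ b % P) := by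
        conv_lhs => rw [← mul_div_nadd_mod hP a, ← mul_div_nadd_mod hP b, hm, hk]
        ac_rfl
    _ = P * (m + k) + (a % P ♯ b % P) := by rw [mul_nadd_mul_natCast hP, mul_nadd_of_lt hP _ hr]
    _ < P * (m + k) + P := add_lt_add_right hr _
    _ = P * (m + k + 1 : ℕ) := by push_cast; rw [mul_add_one]
    _ < P * ω := mul_lt_mul_of_pos_left (natCast_lt_omega0 _) (pos_iff_ne_zero.2 hP₀)

end Principal

theorem isPrincipal_nadd_omega0_opow (γ : Ordinal) : IsPrincipal (· ♯ ·) (ω ^ γ) := by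
  induction γ using limitRecOn with
  | zero => simp
  | add_one γ ih => rw [opow_add_one]; exact isPrincipal_nadd_mul_omega0 ih
  | limit γ hγ ih =>
    intro a b ha hb
    obtain ⟨γa, hγa, ha⟩ := (lt_opow_of_isSuccLimit omega0_ne_zero hγ).1 ha
    obtain ⟨γb, hγb, hb⟩ := (lt_opow_of_isSuccLimit omega0_ne_zero hγ).1 hb
    have hmax := max_lt hγa hγb
    exact (ih _ hmax (ha.trans_le (opow_le_opow_right omega0_pos (le_max_left _ _)))
      (hb.trans_le (opow_le_opow_right omega0_pos (le_max_right _ _)))).trans_le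
      (opow_le_opow_right omega0_pos hmax.le)

-- Split `g` at the leading power `P` of `s`: the part of `g` below `P` is absorbed in `g + s`,
-- and `D + 1` copies of it still stay below `s`.
theorem natCast_nmul_nadd_le_nmul_add {s : Ordinal} (hs : s ≠ 0) (g : Ordinal) (D : ℕ) :
    D ⨳ s ♯ (D + 1 : ℕ) ⨳ g ≤ (D + 1 : ℕ) ⨳ (g + s) := by
  set P := ω ^ log ω s
  have hP := isPrincipal_nadd_omega0_opow (log ω s)
  have hPs : P ≤ s := opow_log_le_self ω hs
  have hsP : s < P * ω := by
    rw [← opow_succ]; exact lt_opow_succ_log_self one_lt_omega0 s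
  have hr : g % P < P := mod_lt g (opow_pos _ omega0_pos).ne'
  have hgs : g + s = P * (g / P) ♯ s := by
    rw [mul_nadd_of_lt_mul_omega0 hP _ hsP]
    conv_lhs => rw [← div_add_mod g P]
    rw [add_assoc, add_of_omega0_opow_le hr hPs]
  calc D ⨳ s ♯ (D + 1 : ℕ) ⨳ g
      = (D + 1 : ℕ) ⨳ (P * (g / P)) ♯ D ⨳ s ♯ (D + 1 : ℕ) ⨳ (g % P) := by
        conv_lhs => rw [← mul_div_nadd_mod hP g]
        rw [nmul_nadd]; ac_rfl
    _ ≤ (D + 1 : ℕ) ⨳ (P * (g / P)) ♯ D ⨳ s ♯ s :=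
        nadd_le_nadd_left ((natCast_nmul_lt hP hr _).le.trans hPs) _
    _ = (D + 1 : ℕ) ⨳ (g + s) := by rw [hgs, nmul_nadd, natCast_succ_nmul D s, nadd_assoc]

theorem omega0_nmul_nadd_natCast_nmul_lt {s : Ordinal} (hs : s ≠ 0) (g : Ordinal)
    (D : ℕ) : ω ⨳ g ♯ D ⨳ s < ω ⨳ (g + s) := by
  refine lt_nmul_iff.2 ⟨(D + 1 : ℕ), natCast_lt_omega0 _, g,
    lt_add_of_pos_right g (pos_iff_ne_zero.2 hs), ?_⟩
  calc ω ⨳ g ♯ D ⨳ s ♯ (D + 1 : ℕ) ⨳ g = ω ⨳ g ♯ (D ⨳ s ♯ (D + 1 : ℕ) ⨳ g) := nadd_assoc _ _ _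
    _ ≤ ω ⨳ g ♯ (D + 1 : ℕ) ⨳ (g + s) :=
        nadd_le_nadd_left (natCast_nmul_nadd_le_nmul_add hs g D) _
    _ = (D + 1 : ℕ) ⨳ (g + s) ♯ ω ⨳ g := nadd_comm _ _

noncomputable def nsum (f : ℕ → Ordinal) : ℕ → Ordinal
  | 0 => 0
  | n + 1 => nsum f n ♯ f n

theorem nsum_le_nsum {f g : ℕ → Ordinal} {n : ℕ} (h : ∀ i < n, f i ≤ g i) :
    nsum f n ≤ nsum g n := by
  induction n with
  | zero => exact le_rfl
  | succ n ih => exact nadd_le_nadd (ih fun i hi => h i (by omega)) (h n (by omega))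

theorem nsum_lt_nsum {f g : ℕ → Ordinal} {n e : ℕ} (h : ∀ i < n, f i ≤ g i) (he : e < n)
    (hlt : f e < g e) : nsum f n < nsum g n := by
  induction n with
  | zero => exact absurd he (Nat.not_lt_zero e)
  | succ n ih =>
    rcases Nat.lt_succ_iff_lt_or_eq.1 he with he | rfl
    · exact nadd_lt_nadd_of_lt_of_le (ih (fun i hi => h i (by omega)) he) (h n (by omega))
    · exact nadd_lt_nadd_of_le_of_lt (nsum_le_nsum fun i hi => h i (by omega)) hlt

theorem nsum_nadd_const (f : ℕ → Ordinal) (s : Ordinal) (n : ℕ) :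
    nsum (fun i => f i ♯ s) n = nsum f n ♯ n ⨳ s := by
  induction n with
  | zero => simp [nsum]
  | succ n ih => rw [nsum, nsum, ih, natCast_succ_nmul]; ac_rfl

theorem nsum_eq_of_le {f : ℕ → Ordinal} {m n : ℕ} (hf : ∀ i, m ≤ i → f i = 0)
    (hmn : m ≤ n) : nsum f n = nsum f m := by
  induction n, hmn using Nat.le_induction with
  | base => rfl
  | succ n hmn ih => rw [nsum, ih, hf n hmn, nadd_zero]

end Ordinal

section RelRank

variable {A M}

open Submodule

def RelRankLE (γ : Ordinal.{u}) (N P : Submodule A M) : Prop :=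
  ∀ y ∈ N, y ∉ P → ∃ (γ' : Ordinal.{u}) (_ : γ' < γ), RelRankLE γ' N (P ⊔ span A {y})
termination_by γ

variable {γ γ' : Ordinal.{u}} {N N' P P' Q : Submodule A M}

theorem relRankLE_iff :
    RelRankLE γ N P ↔ ∀ y ∈ N, y ∉ P → ∃ γ' < γ, RelRankLE γ' N (P ⊔ span A {y}) := by
  rw [RelRankLE]
  simp only [exists_prop]

theorem RelRankLE.mono (h : RelRankLE γ N P) (hγ : γ ≤ γ') (hN : N' ≤ N) (hP : P ≤ P') :
    RelRankLE γ' N' P' := by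
  induction γ using WellFoundedLT.induction generalizing γ' P P' with | ind γ ih
  rw [relRankLE_iff] at h ⊢
  intro y hy hyP
  obtain ⟨δ, hδ, hδP⟩ := h y (hN hy) fun h' => hyP (hP h')
  exact ⟨δ, hδ.trans_le hγ, ih δ hδ hδP le_rfl (sup_le_sup_right hP _)⟩

theorem RelRankLE.of_top_bot (h : RelRankLE γ (⊤ : Submodule A M) ⊥) (N P : Submodule A M) :
    RelRankLE γ N P :=
  h.mono le_rfl le_top bot_le

theorem relRankLE_of_le (h : N ≤ P) (γ : Ordinal.{u}) : RelRankLE γ N P :=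
  relRankLE_iff.2 fun _ hy hyP => absurd (h hy) hyP

theorem sup_span_singleton_add_of_mem {p : M} (hp : p ∈ P) (n : M) :
    P ⊔ span A {n + p} = P ⊔ span A {n} := by
  apply le_antisymm <;> refine sup_le le_sup_left ((span_singleton_le_iff_mem _ _).2 ?_)
  · exact add_mem (mem_sup_right (mem_span_singleton_self n)) (mem_sup_left hp)
  · simpa using sub_mem (mem_sup_right (mem_span_singleton_self (n + p))) (mem_sup_left hp)

theorem RelRankLE.exists_sup_span (h : RelRankLE γ N P) {y : M} (hy : y ∈ N ⊔ P) (hyP : y ∉ P) :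
    ∃ γ' < γ, RelRankLE γ' N (P ⊔ span A {y}) := by
  obtain ⟨n, hn, p, hp, rfl⟩ := mem_sup.1 hy
  rw [sup_span_singleton_add_of_mem hp]
  exact relRankLE_iff.1 h n hn fun hnP => hyP (add_mem hnP hp)

theorem RelRankLE.nadd {r s : Ordinal.{u}} (hr : RelRankLE r N P) (hs : RelRankLE s N' Q)
    (hQ : Q ≤ N ⊔ P) : RelRankLE (r ♯ s) N' P := by
  induction s using WellFoundedLT.induction generalizing r P Q with | ind s ihs
  induction r using WellFoundedLT.induction generalizing P with | ind r ihr
  refine relRankLE_iff.2 fun y hy hyP => ?_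
  by_cases hyNP : y ∈ N ⊔ P
  · obtain ⟨r', hr', hr'P⟩ := hr.exists_sup_span hyNP hyP
    exact ⟨r' ♯ s, nadd_lt_nadd_right hr' s,
      ihr r' hr' hr'P (hQ.trans (sup_le_sup_left le_sup_left N))⟩
  · obtain ⟨s', hs', hs'Q⟩ := relRankLE_iff.1 hs y hy fun h => hyNP (hQ h)
    refine ⟨r ♯ s', nadd_lt_nadd_left hs' r,
      ihs s' hs' (hr.mono le_rfl le_rfl le_sup_left) hs'Q ?_⟩
    exact sup_le (hQ.trans (sup_le_sup_left le_sup_left N)) (le_sup_right.trans le_sup_right)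

noncomputable def relRank (N P : Submodule A M) : Ordinal.{u} :=
  sInf {γ | RelRankLE γ N P}

theorem relRank_le (h : RelRankLE γ N P) : relRank N P ≤ γ :=
  csInf_le' h

theorem relRankLE_relRank (h : RelRankLE γ N P) : RelRankLE (relRank N P : Ordinal.{u}) N P :=
  csInf_mem (s := {γ | RelRankLE γ N P}) ⟨γ, h⟩

theorem relRank_le_relRank (h : RelRankLE γ N P) (hN : N' ≤ N) (hP : P ≤ P') :
    relRank N' P' ≤ (relRank N P : Ordinal.{u}) :=
  relRank_le ((relRankLE_relRank h).mono le_rfl hN hP)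

theorem relRank_eq_zero (h : N ≤ P) : relRank N P = (0 : Ordinal.{u}) :=
  nonpos_iff_eq_zero.1 (relRank_le (relRankLE_of_le h 0))

theorem relRank_sup_span_lt (h : RelRankLE γ N P) {y : M} (hy : y ∈ N ⊔ P) (hyP : y ∉ P) :
    relRank N (P ⊔ span A {y}) < (relRank N P : Ordinal.{u}) := by
  obtain ⟨γ', hγ', h'⟩ := (relRankLE_relRank h).exists_sup_span hy hyP
  exact (relRank_le h').trans_lt hγ'

theorem exists_le_relRank_sup_span (h : RelRankLE γ N P) {δ : Ordinal.{u}}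
    (hδ : δ < relRank N P) : ∃ y ∈ N, y ∉ P ∧ δ ≤ relRank N (P ⊔ span A {y}) := by
  by_contra! H
  refine hδ.not_ge (relRank_le (relRankLE_iff.2 fun y hy hyP => ?_))
  exact ⟨_, H y hy hyP, relRankLE_relRank (h.mono le_rfl le_rfl le_sup_left)⟩

theorem relRank_le_nadd (hN : RelRankLE γ N P) (hN' : RelRankLE γ' N' Q) (hQ : Q ≤ N ⊔ P) :
    relRank N' P ≤ (relRank N P ♯ relRank N' Q : Ordinal.{u}) :=
  relRank_le ((relRankLE_relRank hN).nadd (relRankLE_relRank hN') hQ)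

-- Playing the game of `Q` over `P` and then jumping to `P ⊔ Q` is a way of playing that of `N`.
theorem relRank_sup_add_relRank_le (h : RelRankLE γ N P) (hQ : Q ≤ N) :
    relRank N (P ⊔ Q) + relRank Q P ≤ (relRank N P : Ordinal.{u}) := by
  induction hs : (relRank Q P : Ordinal.{u}) using WellFoundedLT.induction generalizing P
    with | ind s ih
  rcases eq_or_ne s 0 with rfl | hs₀
  · simpa using relRank_le_relRank h le_rfl le_sup_left
  have hQP := h.mono le_rfl hQ le_rfl
  refine (add_le_iff hs₀).2 fun d hd => ?_
  obtain ⟨y, hyQ, hyP, hdy⟩ := exists_le_relRank_sup_span hQP (hs ▸ hd)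
  have hys : relRank Q (P ⊔ span A {y}) < s :=
    hs ▸ relRank_sup_span_lt hQP (mem_sup_left hyQ) hyP
  have hPQ : P ⊔ span A {y} ⊔ Q = P ⊔ Q := by
    rw [sup_assoc, sup_eq_right.2 ((span_singleton_le_iff_mem _ _).2 hyQ)]
  calc relRank N (P ⊔ Q) + d ≤ relRank N (P ⊔ Q) + relRank Q (P ⊔ span A {y}) :=
        add_le_add_right hdy _
    _ ≤ relRank N (P ⊔ span A {y}) := by
        simpa only [hPQ] using ih _ hys (h.mono le_rfl le_rfl le_sup_left) rfl
    _ < relRank N P := relRank_sup_span_lt h (mem_sup_left (hQ hyQ)) hyP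

end RelRank

section Lists

variable {A M}

open Submodule

theorem goodList_append_singleton_iff {σ : List M} {x : M} :
    GoodList A (σ ++ [x]) ↔ x ∈ span A {y | y ∈ σ} := by
  constructor
  · rintro ⟨l, y, h, hy⟩
    obtain ⟨rfl, rfl⟩ := List.append_singleton_inj.1 h
    exact hy
  · exact fun hx => ⟨σ, x, rfl, hx⟩

theorem span_setOf_mem_append_singleton (σ : List M) (x : M) :
    span A {y | y ∈ σ ++ [x]} = span A {y | y ∈ σ} ⊔ span A {x} := by
  rw [← span_union]
  congr 1
  ext y
  simp [or_comm]

theorem alphaGood_iff_relRankLE (γ : Ordinal.{u}) (σ : List M) :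
    AlphaGood A γ σ ↔ RelRankLE γ ⊤ (span A {y | y ∈ σ}) := by
  induction γ using WellFoundedLT.induction generalizing σ with | ind γ ih
  rw [AlphaGood, relRankLE_iff]
  simp only [goodList_append_singleton_iff, mem_top, true_implies, exists_prop,
    ← span_setOf_mem_append_singleton, or_iff_not_imp_left]
  exact forall_congr' fun x => imp_congr_right fun _ =>
    exists_congr fun γ' => and_congr_right fun hγ' => ih γ' hγ' _

end Lists

section LeadingCoeff

variable {A M}

open Polynomial Submodule

theorem C_smul_apply (a : A) (f : ℕ →₀ M) (n : ℕ) : (C a • f) n = a • f n := by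
  change eval₂ (coeffMulHom A M) (shiftEnd M) (C a) f n = _
  rw [eval₂_C]
  rfl

theorem X_smul_apply_succ (f : ℕ →₀ M) (n : ℕ) : ((X : A[X]) • f) (n + 1) = f n := by
  change eval₂ (coeffMulHom A M) (shiftEnd M) X f (n + 1) = _
  rw [eval₂_X]
  exact Finsupp.mapDomain_apply (add_left_injective 1) f n

def leadingCoeffNth (I : Submodule A[X] (ℕ →₀ M)) (n : ℕ) : Submodule A M where
  carrier := {c | ∃ f ∈ I, (∀ k, n < k → f k = 0) ∧ f n = c}
  zero_mem' := ⟨0, zero_mem I, fun _ _ => rfl, rfl⟩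
  add_mem' := by
    rintro _ _ ⟨f, hf, hfn, rfl⟩ ⟨g, hg, hgn, rfl⟩
    exact ⟨f + g, add_mem hf hg, fun k hk => by simp [hfn k hk, hgn k hk], rfl⟩
  smul_mem' := by
    rintro a _ ⟨f, hf, hfn, rfl⟩
    exact ⟨C a • f, I.smul_mem _ hf, fun k hk => by rw [C_smul_apply, hfn k hk, smul_zero],
      C_smul_apply a f n⟩

theorem leadingCoeffNth_mono {I J : Submodule A[X] (ℕ →₀ M)} (h : I ≤ J) :
    leadingCoeffNth I ≤ leadingCoeffNth J :=
  fun _ _ ⟨f, hf, hfn, hfc⟩ => ⟨f, h hf, hfn, hfc⟩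

theorem monotone_leadingCoeffNth (I : Submodule A[X] (ℕ →₀ M)) :
    Monotone (leadingCoeffNth I) := by
  refine monotone_nat_of_le_succ fun n => ?_
  rintro _ ⟨f, hf, hfn, rfl⟩
  refine ⟨X • f, I.smul_mem _ hf, fun k hk => ?_, X_smul_apply_succ f n⟩
  obtain ⟨k, rfl⟩ := Nat.exists_eq_add_one.2 (by omega : 0 < k)
  rw [X_smul_apply_succ, hfn k (by omega)]

theorem le_of_leadingCoeffNth_le {I J : Submodule A[X] (ℕ →₀ M)} (hIJ : I ≤ J)
    (h : leadingCoeffNth J ≤ leadingCoeffNth I) : J ≤ I := by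
  intro p hp
  obtain ⟨d, hd⟩ := Finset.exists_nat_subset_range p.support
  replace hd : ∀ k, d ≤ k → p k = 0 := fun k hk =>
    Finsupp.notMem_support_iff.1 fun hk' => (Finset.mem_range.1 (hd hk')).not_ge hk
  induction d generalizing p with
  | zero => simp [show p = 0 from Finsupp.ext fun k => hd k k.zero_le]
  | succ d ih =>
    obtain ⟨f, hf, hfd, hfp⟩ := h d ⟨p, hp, fun k hk => hd k hk, rfl⟩
    have hpf : p - f ∈ I := ih (sub_mem hp (hIJ hf)) fun k hk => by
      rcases hk.eq_or_lt with rfl | hk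
      · simp [hfp]
      · simp [hd k hk, hfd k hk]
    simpa using add_mem hpf hf

end LeadingCoeff

open Submodule Polynomial

-- `limit`, `layer k` and `bound` are the `Λ`, `Tₖ` and `B` of the sketch at the top.
structure CoeffApprox where
  limit : Submodule A M
  layer : ℕ → Submodule A M
  bound : ℕ
  layer_eq_limit : ∀ n, bound ≤ n → layer n = limit

namespace CoeffApprox

variable {A M}

noncomputable def measure (S : CoeffApprox A M) : Ordinal.{u} :=
  ω ⨳ relRank ⊤ S.limit ♯ nsum (fun n => relRank S.limit (S.layer n)) S.bound

def insert (S : CoeffApprox A M) (n : ℕ) (c : M) : CoeffApprox A M where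
  limit := S.limit ⊔ span A {c}
  layer k := if n ≤ k then S.layer k ⊔ span A {c} else S.layer k
  bound := max S.bound (n + 1)
  layer_eq_limit k hk := by
    rw [if_pos (by omega), S.layer_eq_limit k (le_of_max_le_left hk)]

variable {S : CoeffApprox A M} {γ : Ordinal.{u}}

theorem layer_le_insert_layer (n : ℕ) (c : M) (k : ℕ) : S.layer k ≤ (S.insert n c).layer k := by
  simp only [insert]
  split_ifs
  · exact le_sup_left
  · exact le_rfl

theorem insert_layer_le {I J : Submodule A[X] (ℕ →₀ M)} (hS : S.layer ≤ leadingCoeffNth I)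
    (hIJ : I ≤ J) {n : ℕ} {c : M} (hc : c ∈ leadingCoeffNth J n) :
    (S.insert n c).layer ≤ leadingCoeffNth J := by
  intro k
  have hSk := (hS k).trans (leadingCoeffNth_mono hIJ k)
  simp only [insert]
  split_ifs with hk
  · exact sup_le hSk ((span_singleton_le_iff_mem _ _).2 (monotone_leadingCoeffNth J hk hc))
  · exact hSk

theorem measure_insert_lt_of_mem_limit (hM : RelRankLE γ (⊤ : Submodule A M) ⊥) {n : ℕ}
    {c : M} (hc : c ∉ S.layer n) (hcS : c ∈ S.limit) :
    (S.insert n c).measure < (S.measure : Ordinal.{u}) := by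
  have hn : n < S.bound := by
    by_contra! h
    exact hc (S.layer_eq_limit n h ▸ hcS)
  have hlim : S.limit ⊔ span A {c} = S.limit :=
    sup_eq_left.2 ((span_singleton_le_iff_mem _ _).2 hcS)
  simp only [measure, insert, hlim, max_eq_left (Nat.succ_le_of_lt hn)]
  refine nadd_lt_nadd_left (nsum_lt_nsum (fun k _ => ?_) hn ?_) _
  · split_ifs
    · exact relRank_le_relRank (hM.of_top_bot _ _) le_rfl le_sup_left
    · exact le_rfl
  · rw [if_pos le_rfl]
    exact relRank_sup_span_lt (hM.of_top_bot _ _) (mem_sup_left hcS) hc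

theorem measure_insert_lt_of_not_mem_limit (hM : RelRankLE γ (⊤ : Submodule A M) ⊥) (n : ℕ)
    {c : M} (hc : c ∉ S.limit) : (S.insert n c).measure < (S.measure : Ordinal.{u}) := by
  set Λ := S.limit
  set Λ' := Λ ⊔ span A {c}
  set s : Ordinal.{u} := relRank Λ' Λ
  set r : ℕ → Ordinal.{u} := fun k => relRank Λ (S.layer k)
  set B' := max S.bound (n + 1)
  have hs : s ≠ 0 :=
    (pos_of_gt (relRank_sup_span_lt (N := Λ') (P := Λ) (hM.of_top_bot _ _)
      (mem_sup_left (mem_sup_right (mem_span_singleton_self c))) hc)).ne'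
  have hcouple : relRank ⊤ Λ' + s ≤ (relRank ⊤ Λ : Ordinal.{u}) := by
    have := relRank_sup_add_relRank_le (P := Λ) (Q := Λ') (hM.of_top_bot _ _) le_top
    rwa [sup_eq_right.2 (le_sup_left : Λ ≤ Λ')] at this
  have hlayer (k : ℕ) : relRank Λ' ((S.insert n c).layer k) ≤ r k ♯ s :=
    (relRank_le_relRank (hM.of_top_bot _ _) le_rfl (layer_le_insert_layer n c k)).trans
      (relRank_le_nadd (hM.of_top_bot _ _) (hM.of_top_bot _ _) le_sup_left)
  have hr : ∀ k, S.bound ≤ k → r k = 0 := fun k hk => relRank_eq_zero (S.layer_eq_limit k hk).ge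
  calc (S.insert n c).measure
      = ω ⨳ relRank ⊤ Λ' ♯ nsum (fun k => relRank Λ' ((S.insert n c).layer k)) B' := rfl
    _ ≤ ω ⨳ relRank ⊤ Λ' ♯ nsum (fun k => r k ♯ s) B' :=
        nadd_le_nadd_left (nsum_le_nsum fun k _ => hlayer k) _
    _ = ω ⨳ relRank ⊤ Λ' ♯ B' ⨳ s ♯ nsum r S.bound := by
        rw [nsum_nadd_const, nsum_eq_of_le hr (le_max_left _ _)]; ac_rfl
    _ < ω ⨳ (relRank ⊤ Λ' + s) ♯ nsum r S.bound :=
        nadd_lt_nadd_right (omega0_nmul_nadd_natCast_nmul_lt hs _ _) _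
    _ ≤ S.measure := nadd_le_nadd_right (nmul_le_nmul_left hcouple _) _

theorem measure_insert_lt (hM : RelRankLE γ (⊤ : Submodule A M) ⊥) {n : ℕ} {c : M}
    (hc : c ∉ S.layer n) : (S.insert n c).measure < (S.measure : Ordinal.{u}) := by
  by_cases hcS : c ∈ S.limit
  · exact measure_insert_lt_of_mem_limit hM hc hcS
  · exact measure_insert_lt_of_not_mem_limit hM n hcS

theorem relRankLE_measure (hM : RelRankLE γ (⊤ : Submodule A M) ⊥)
    {I : Submodule A[X] (ℕ →₀ M)} (hS : S.layer ≤ leadingCoeffNth I) :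
    RelRankLE (S.measure : Ordinal.{u}) ⊤ I := by
  induction hΓ : (S.measure : Ordinal.{u}) using WellFoundedLT.induction generalizing S I
    with | ind Γ ih
  refine relRankLE_iff.2 fun p _ hp => ?_
  have hJ : ¬ leadingCoeffNth (I ⊔ span A[X] {p}) ≤ leadingCoeffNth I := fun h =>
    hp (le_of_leadingCoeffNth_le le_sup_left h (mem_sup_right (mem_span_singleton_self p)))
  obtain ⟨n, hn⟩ := not_forall.1 hJ
  obtain ⟨c, hcJ, hcI⟩ := SetLike.not_le_iff_exists.1 hn
  have hlt := hΓ ▸ measure_insert_lt hM fun hc => hcI (hS n hc)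
  exact ⟨_, hlt, ih _ hlt (insert_layer_le hS le_sup_left hcJ) rfl⟩

end CoeffApprox

/-- Quantitative Hilbert basis theorem: if `M` is an `α`-Noetherian module over a
ring `A`, then the polynomial module `M[X]` is `(ω ⊗ α)`-Noetherian over `A[X]`,
where `⊗` is the Hessenberg natural product. -/
theorem polynomialModule_nmul_noetherian (α : Ordinal)
    (h : AlphaGood A α ([] : List M)) :
    AlphaGood (Polynomial A) (Ordinal.nmul Ordinal.omega0 α)
      ([] : List (ℕ →₀ M)) := by
  have hM : RelRankLE α ⊤ (⊥ : Submodule A M) := by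
    simpa using (alphaGood_iff_relRankLE α []).1 h
  let S : CoeffApprox A M := ⟨⊥, fun _ => ⊥, 0, fun _ _ => rfl⟩
  have hS : S.measure ≤ ω ⨳ α := by
    simpa [S, CoeffApprox.measure, nsum] using nmul_le_nmul_left (relRank_le hM) ω
  simpa using (alphaGood_iff_relRankLE _ []).2
    ((S.relRankLE_measure hM fun _ => bot_le).mono hS le_rfl le_rfl)

end
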